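/- Let μ be a real parameter with μ + 1/2 not a non-positive integer, and define the Dunkl intertwining operator V_μ on polynomials by its action on monomials: V_μ(x^{2n+ε}) = [(1/2)_{n+ε} / (μ + 1/2)_{n+ε}] x^{2n+ε} for ε ∈ {0,1}. Then for the physicists' Hermite polynomials, V_μ H_{2n+ε}(x) = [(1/2)_{n+ε} / (μ + 1/2)_{n+ε}] Σ_{ℓ=0}^{n} (-1)^ℓ 2^{2ℓ} binom(n, ℓ) (μ)_ℓ H_{2(n-ℓ)+ε}(x). -/

import Mathlib

open Polynomial in
noncomputable def hermiteP : ℕ → Polynomial ℝ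
  | 0 => 1
  | 1 => 2 * X
  | (n + 2) => 2 * X * hermiteP (n + 1) - C (2 * ((n : ℝ) + 1)) * hermiteP n

open Finset Polynomial

/-!
The coefficient of `x^(2k+ε)` in `H_{2n+ε}` is `2^ε 4^n (-1)^(n-k) C(n,k) (k+ε+1/2)_(n-k)`, so
`V_μ H_{2n+ε}` has coefficient `(1/2)_(k+ε) / (μ+1/2)_(k+ε)` times that. On the right-hand side,
after `C(n,ℓ) C(n-ℓ,k) = C(n,k) C(n-k,ℓ)`, the coefficient of `x^(2k+ε)` is a Chu–Vandermonde sum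
`∑ C(n-k,ℓ) (μ)_ℓ (k+ε+1/2)_(n-k-ℓ) = (μ+k+ε+1/2)_(n-k)`, and the two sides agree because
`(a)_j (a+j)_d = (a)_(j+d)`.
-/

theorem ascPochhammer_add_eval {R : Type*} [CommSemiring R] (m j : ℕ) (x : R) :
    (ascPochhammer R (m + j)).eval x
      = (ascPochhammer R m).eval x * (ascPochhammer R j).eval (x + m) := by
  rw [← ascPochhammer_mul, eval_mul, eval_comp, eval_add, eval_X, eval_natCast]

theorem ascPochhammer_eval_add {R : Type*} [CommSemiring R] (a b : R) (n : ℕ) :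
    (ascPochhammer R n).eval (a + b) = ∑ ij ∈ antidiagonal n,
      n.choose ij.1 * ((ascPochhammer R ij.1).eval a * (ascPochhammer R ij.2).eval b) := by
  induction n with
  | zero => simp
  | succ n ih =>
    rw [sum_antidiagonal_choose_succ_mul
        (fun i j => (ascPochhammer R i).eval a * (ascPochhammer R j).eval b),
      ← sum_add_distrib, ascPochhammer_succ_eval, ih, sum_mul]
    refine sum_congr rfl fun ij hij => ?_
    have hn : (n : R) = ij.1 + ij.2 := by rw [← mem_antidiagonal.mp hij, Nat.cast_add]
    rw [Nat.choose_symm_of_eq_add (mem_antidiagonal.mp hij).symm, ascPochhammer_succ_eval,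
      ascPochhammer_succ_eval, hn]
    ring

theorem ascPochhammer_eval_ne_zero {R : Type*} [CommRing R] [IsDomain R] {x : R}
    (hx : ∀ j : ℕ, x ≠ -j) (m : ℕ) : (ascPochhammer R m).eval x ≠ 0 := by
  rw [ne_eq, ascPochhammer_eval_eq_zero_iff]
  rintro ⟨j, -, hj⟩
  exact hx j (by rw [hj, neg_neg])

theorem ascPochhammer_div_mul_eval_add {K : Type*} [Field K] (a b : K) (j M : ℕ)
    (hb : (ascPochhammer K (j + M)).eval b ≠ 0) :
    (ascPochhammer K j).eval a / (ascPochhammer K j).eval b * (ascPochhammer K M).eval (a + j)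
      = (ascPochhammer K (j + M)).eval a / (ascPochhammer K (j + M)).eval b
        * (ascPochhammer K M).eval (b + j) := by
  rw [ascPochhammer_add_eval, ascPochhammer_add_eval] at *
  have hbj : (ascPochhammer K j).eval b ≠ 0 := left_ne_zero_of_mul hb
  have hbM : (ascPochhammer K M).eval (b + j) ≠ 0 := right_ne_zero_of_mul hb
  field_simp

theorem Nat.cast_succ_choose_mul_sub (R : Type*) [CommRing R] (n k : ℕ) :
    ((n + 1).choose k : R) * (n + 1 - k) = (n + 1) * n.choose k := by
  rcases le_or_gt k (n + 1) with hk | hk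
  · have h := congrArg (Nat.cast : ℕ → R) (Nat.choose_mul_succ_eq n k)
    push_cast [Nat.cast_sub hk] at h
    linear_combination -h
  · simp [Nat.choose_eq_zero_of_lt hk, Nat.choose_eq_zero_of_lt (Nat.lt_of_succ_lt hk)]

theorem Nat.choose_add_mul_choose (k l j : ℕ) :
    (k + (l + j)).choose l * (k + j).choose k = (k + (l + j)).choose k * (l + j).choose l := by
  have h := Nat.choose_mul (n := k + (l + j)) (k := k + j) (s := k) (by omega)
  rwa [Nat.choose_symm_of_eq_add (show k + (l + j) = (k + j) + l by omega),
    show k + (l + j) - k = l + j by omega, show k + j - k = j by omega,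
    ← Nat.choose_symm_add (a := l) (b := j)] at h

/-- The ratio of Pochhammer symbols is `(k + ε + 1/2)_(n - k)` written without truncated
subtraction; the binomial makes the coefficient vanish for `k > n`. -/
noncomputable def hermiteCoeff (n k ε : ℕ) : ℝ :=
  2 ^ ε * 4 ^ n * (-1) ^ (n + k) * n.choose k *
    ((ascPochhammer ℝ (n + ε)).eval (1 / 2) / (ascPochhammer ℝ (k + ε)).eval (1 / 2))

theorem hermiteCoeff_of_lt {n k : ℕ} (ε : ℕ) (h : n < k) : hermiteCoeff n k ε = 0 := by
  simp [hermiteCoeff, Nat.choose_eq_zero_of_lt h]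

theorem hermiteCoeff_succ_zero_zero (n : ℕ) :
    hermiteCoeff (n + 1) 0 0 = -(2 * (2 * n + 1)) * hermiteCoeff n 0 0 := by
  simp only [hermiteCoeff, ascPochhammer_succ_eval, add_zero, Nat.choose_zero_right]
  ring

theorem hermiteCoeff_succ_succ_zero (n k : ℕ) :
    hermiteCoeff (n + 1) (k + 1) 0
      = 2 * hermiteCoeff n k 1 - 2 * (2 * n + 1) * hermiteCoeff n (k + 1) 0 := by
  have := ascPochhammer_pos (k + 1) (1 / 2 : ℝ) (by norm_num)
  simp only [hermiteCoeff, Nat.choose_succ_succ', Nat.cast_add, ascPochhammer_succ_eval (n := n),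
    add_zero]
  field_simp
  ring

theorem hermiteCoeff_succ_one (n k : ℕ) :
    hermiteCoeff (n + 1) k 1
      = 2 * hermiteCoeff (n + 1) k 0 - 2 * (2 * n + 2) * hermiteCoeff n k 1 := by
  have := ascPochhammer_pos k (1 / 2 : ℝ) (by norm_num)
  simp only [hermiteCoeff, ascPochhammer_succ_eval (n := n + 1), ascPochhammer_succ_eval (n := k),
    add_zero]
  field_simp
  push_cast
  linear_combination (-8 * (ascPochhammer ℝ (n + 1)).eval (1 / 2) * 4 ^ n * (-1) ^ (n + k)) *
    Nat.cast_succ_choose_mul_sub ℝ n k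

theorem hermiteP_add_two (m : ℕ) :
    hermiteP (m + 2) = 2 * X * hermiteP (m + 1) - C (2 * ((m : ℝ) + 1)) * hermiteP m := by
  rw [hermiteP]

theorem two_mul_X_mul_sum_C_mul_X_pow {R ι : Type*} [CommSemiring R] (s : Finset ι) (f : ι → R)
    (e : ι → ℕ) :
    2 * X * ∑ i ∈ s, C (f i) * X ^ e i = ∑ i ∈ s, C (2 * f i) * X ^ (e i + 1) := by
  rw [mul_sum]
  refine sum_congr rfl fun i _ => ?_
  rw [map_mul, map_ofNat, pow_succ]
  ring

theorem C_mul_sum_C_mul_X_pow {R ι : Type*} [CommSemiring R] (s : Finset ι) (c : R) (f : ι → R)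
    (e : ι → ℕ) :
    C c * ∑ i ∈ s, C (f i) * X ^ e i = ∑ i ∈ s, C (c * f i) * X ^ e i := by
  simp only [mul_sum, map_mul, mul_assoc]

theorem hermiteP_two_mul_succ_eq_sum {n N : ℕ}
    (heven : hermiteP (2 * n) = ∑ k ∈ range (N + 1), C (hermiteCoeff n k 0) * X ^ (2 * k))
    (hodd : hermiteP (2 * n + 1) = ∑ k ∈ range N, C (hermiteCoeff n k 1) * X ^ (2 * k + 1)) :
    hermiteP (2 * (n + 1))
      = ∑ k ∈ range (N + 1), C (hermiteCoeff (n + 1) k 0) * X ^ (2 * k) := by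
  have hsum : ∑ k ∈ range N, C (hermiteCoeff (n + 1) (k + 1) 0) * X ^ (2 * (k + 1))
      = ∑ k ∈ range N, C (2 * hermiteCoeff n k 1) * X ^ (2 * k + 1 + 1)
        - ∑ k ∈ range N, C (2 * (((2 * n : ℕ) : ℝ) + 1) * hermiteCoeff n (k + 1) 0)
          * X ^ (2 * (k + 1)) := by
    rw [← sum_sub_distrib]
    refine sum_congr rfl fun k _ => ?_
    rw [hermiteCoeff_succ_succ_zero, map_sub, sub_mul]
    push_cast
    ring
  rw [show 2 * (n + 1) = 2 * n + 2 by ring, hermiteP_add_two, hodd, heven, sum_range_succ',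
    sum_range_succ', two_mul_X_mul_sum_C_mul_X_pow, mul_add, C_mul_sum_C_mul_X_pow, hsum,
    hermiteCoeff_succ_zero_zero]
  push_cast
  simp only [map_mul, map_neg]
  ring

theorem hermiteP_two_mul_succ_add_one_eq_sum {n N : ℕ}
    (hodd : hermiteP (2 * n + 1) = ∑ k ∈ range N, C (hermiteCoeff n k 1) * X ^ (2 * k + 1))
    (heven : hermiteP (2 * (n + 1))
      = ∑ k ∈ range N, C (hermiteCoeff (n + 1) k 0) * X ^ (2 * k)) :
    hermiteP (2 * (n + 1) + 1)
      = ∑ k ∈ range N, C (hermiteCoeff (n + 1) k 1) * X ^ (2 * k + 1) := by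
  rw [show 2 * (n + 1) + 1 = (2 * n + 1) + 2 by ring, hermiteP_add_two, hodd,
    ← show 2 * (n + 1) = 2 * n + 1 + 1 by ring, heven, two_mul_X_mul_sum_C_mul_X_pow,
    C_mul_sum_C_mul_X_pow, ← sum_sub_distrib]
  refine sum_congr rfl fun k _ => ?_
  rw [hermiteCoeff_succ_one, map_sub, sub_mul]
  push_cast
  ring_nf

theorem hermiteP_even_odd_eq_sum (n : ℕ) :
    (∀ N, n < N → hermiteP (2 * n) = ∑ k ∈ range N, C (hermiteCoeff n k 0) * X ^ (2 * k)) ∧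
    (∀ N, n < N → hermiteP (2 * n + 1)
      = ∑ k ∈ range N, C (hermiteCoeff n k 1) * X ^ (2 * k + 1)) := by
  induction n with
  | zero =>
    constructor <;> intro N hN <;>
    rw [sum_eq_single_of_mem 0 (mem_range.mpr hN) fun k _ hk =>
      by rw [hermiteCoeff_of_lt _ (Nat.pos_of_ne_zero hk), map_zero, zero_mul]] <;>
    simp [hermiteP, hermiteCoeff, map_ofNat]
  | succ n ih =>
    have heven : ∀ N, n + 1 < N →
        hermiteP (2 * (n + 1)) = ∑ k ∈ range N, C (hermiteCoeff (n + 1) k 0) * X ^ (2 * k) := by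
      rintro (_ | N) hN
      · omega
      exact hermiteP_two_mul_succ_eq_sum (ih.1 _ (by omega)) (ih.2 _ (by omega))
    exact ⟨heven, fun N hN =>
      hermiteP_two_mul_succ_add_one_eq_sum (ih.2 N (by omega)) (heven N hN)⟩

theorem hermiteP_eq_sum (n : ℕ) {ε : ℕ} (hε : ε ≤ 1) {N : ℕ} (hN : n < N) :
    hermiteP (2 * n + ε) = ∑ k ∈ range N, C (hermiteCoeff n k ε) * X ^ (2 * k + ε) := by
  interval_cases ε
  · exact (hermiteP_even_odd_eq_sum n).1 N hN
  · exact (hermiteP_even_odd_eq_sum n).2 N hN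

theorem hermiteCoeff_add_left (k j ε : ℕ) :
    hermiteCoeff (k + j) k ε = 2 ^ ε * 4 ^ (k + j) * (-1) ^ j * (k + j).choose k *
      (ascPochhammer ℝ j).eval (1 / 2 + ((k + ε : ℕ) : ℝ)) := by
  have := ascPochhammer_pos (k + ε) (1 / 2 : ℝ) (by norm_num)
  rw [hermiteCoeff, show k + j + ε = (k + ε) + j by omega, ascPochhammer_add_eval,
    show k + j + k = 2 * k + j by omega, pow_add (-1 : ℝ), pow_mul]
  field_simp
  norm_num

theorem hermiteCoeff_connection {μ : ℝ} (hμ : ∀ j : ℕ, μ + 1 / 2 ≠ -(j : ℝ)) (ε : ℕ) {n k : ℕ}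
    (hk : k ≤ n) :
    hermiteCoeff n k ε * ((ascPochhammer ℝ (k + ε)).eval (1 / 2)
        / (ascPochhammer ℝ (k + ε)).eval (μ + 1 / 2))
      = (ascPochhammer ℝ (n + ε)).eval (1 / 2) / (ascPochhammer ℝ (n + ε)).eval (μ + 1 / 2) *
        ∑ ℓ ∈ range (n + 1), (-1) ^ ℓ * 2 ^ (2 * ℓ) * (n.choose ℓ : ℝ) *
          (ascPochhammer ℝ ℓ).eval μ * hermiteCoeff (n - ℓ) k ε := by
  obtain ⟨M, rfl⟩ := Nat.exists_eq_add_of_le hk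
  set b : ℝ := 1 / 2 + ((k + ε : ℕ) : ℝ) with hb
  have hcoeff (j : ℕ) : hermiteCoeff (k + j) k ε
      = 2 ^ ε * 4 ^ (k + j) * (-1) ^ j * (k + j).choose k * (ascPochhammer ℝ j).eval b :=
    hermiteCoeff_add_left k j ε
  have hsum : ∑ ℓ ∈ range (k + M + 1), (-1) ^ ℓ * 2 ^ (2 * ℓ) * ((k + M).choose ℓ : ℝ) *
      (ascPochhammer ℝ ℓ).eval μ * hermiteCoeff (k + M - ℓ) k ε
        = 2 ^ ε * 4 ^ (k + M) * (-1) ^ M * (k + M).choose k *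
          (ascPochhammer ℝ M).eval (μ + b) := by
    rw [← sum_subset (range_subset_range.mpr (by omega : M + 1 ≤ k + M + 1)) fun ℓ hℓ hℓ' => by
      rw [hermiteCoeff_of_lt ε (by simp at hℓ hℓ'; omega), mul_zero],
      ascPochhammer_eval_add, Nat.sum_antidiagonal_eq_sum_range_succ (fun i j =>
        (M.choose i : ℝ) * ((ascPochhammer ℝ i).eval μ * (ascPochhammer ℝ j).eval b)), mul_sum]
    refine sum_congr rfl fun ℓ hℓ => ?_
    obtain ⟨j, rfl⟩ := Nat.exists_eq_add_of_le (Nat.lt_succ_iff.mp (mem_range.mp hℓ))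
    have hchoose : ((k + (ℓ + j)).choose ℓ : ℝ) * (k + j).choose k
        = (k + (ℓ + j)).choose k * (ℓ + j).choose ℓ := by
      exact_mod_cast Nat.choose_add_mul_choose k ℓ j
    rw [show k + (ℓ + j) - ℓ = k + j by omega, show ℓ + j - ℓ = j by omega, hcoeff, pow_mul,
      show (2 : ℝ) ^ 2 = 4 by norm_num]
    linear_combination (2 ^ ε * 4 ^ (k + (ℓ + j)) * (-1) ^ (ℓ + j) * (ascPochhammer ℝ ℓ).eval μ *
      (ascPochhammer ℝ j).eval b) * hchoose
  have hratio := ascPochhammer_div_mul_eval_add (1 / 2) (μ + 1 / 2) (k + ε) M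
    (ascPochhammer_eval_ne_zero hμ _)
  rw [add_assoc μ, ← hb] at hratio
  rw [hsum, hcoeff, show k + M + ε = (k + ε) + M by omega]
  linear_combination (2 ^ ε * 4 ^ (k + M) * (-1) ^ M * (k + M).choose k : ℝ) * hratio

theorem dunkl_intertwiner_on_hermite (μ : ℝ) (hμ : ∀ j : ℕ, μ + 1/2 ≠ -(j : ℝ))
    (V : Polynomial ℝ →ₗ[ℝ] Polynomial ℝ)
    (hV : ∀ m ε : ℕ, ε ≤ 1 →
      V (X^(2*m + ε))
        = C ((ascPochhammer ℝ (m + ε)).eval (1/2)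
              / (ascPochhammer ℝ (m + ε)).eval (μ + 1/2)) * X^(2*m + ε))
    (n ε : ℕ) (hε : ε ≤ 1) :
    V (hermiteP (2*n + ε))
    = C ((ascPochhammer ℝ (n + ε)).eval (1/2)
          / (ascPochhammer ℝ (n + ε)).eval (μ + 1/2))
        * ∑ ℓ ∈ Finset.range (n + 1),
            C ((-1)^ℓ * 2^(2*ℓ) * (n.choose ℓ : ℝ) * (ascPochhammer ℝ ℓ).eval μ)
              * hermiteP (2*(n - ℓ) + ε) := by
  have hV_C_mul (k : ℕ) (a : ℝ) : V (C a * X ^ (2 * k + ε)) = C (a *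
      ((ascPochhammer ℝ (k + ε)).eval (1 / 2) / (ascPochhammer ℝ (k + ε)).eval (μ + 1 / 2)))
        * X ^ (2 * k + ε) := by
    rw [← smul_eq_C_mul, map_smul, hV k ε hε, smul_eq_C_mul, ← mul_assoc, ← map_mul]
  have hexpand (ℓ : ℕ) : hermiteP (2 * (n - ℓ) + ε)
      = ∑ k ∈ range (n + 1), C (hermiteCoeff (n - ℓ) k ε) * X ^ (2 * k + ε) :=
    hermiteP_eq_sum _ hε (by omega)
  rw [hermiteP_eq_sum n hε (Nat.lt_add_one n), map_sum]
  simp only [hexpand, mul_sum, ← mul_assoc, ← map_mul]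
  rw [sum_comm]
  refine sum_congr rfl fun k hk => ?_
  rw [hV_C_mul, ← sum_mul, ← map_sum, hermiteCoeff_connection hμ ε (by simp at hk; omega),
    mul_sum]
  simp only [mul_assoc]
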